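/- (Euclidean expression of the Schwarzian of a conformal immersion) Let f : M → ℝ^n be a conformal immersion with |df|² = e^{2u}|dz|², and let ψ = (1,f)e^{-u} be the normalized lift into the light cone. Then the Schwarzian c defined by the Hill equation ψ_{zz} + (c/2)ψ = κ (κ normal to V = span{ψ, ψ_z, ψ_{z̄}, ψ_{zz̄}}) satisfies (c/2) dz² = ⟨H, II^{(2,0)}⟩ + (u_{zz} - u_z²) dz², where II^{(2,0)} is the (2,0)-part of the second fundamental form and H the mean curvature vector. -/

import Mathlib

open Finset

/-- Complex-bilinear Lorentzian form on `ℂ^{n+2}`. -/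
noncomputable def lorBC (n : ℕ) (u v : Fin (n + 2) → ℂ) : ℂ :=
  -(u 0 * v 0) + ∑ i : Fin (n + 1), u i.succ * v i.succ

/-- Real Euclidean dot product on `ℝ^m`. -/
def dotR {m : ℕ} (u v : Fin m → ℝ) : ℝ := ∑ i, u i * v i

/-- Complex-bilinear Euclidean dot product on `ℂ^m`. -/
noncomputable def dotC {m : ℕ} (u v : Fin m → ℂ) : ℂ := ∑ i, u i * v i

/-- Wirtinger derivative `∂_z = (∂_x - i ∂_y)/2` of a `ℂ^m`-valued map. -/
noncomputable def wdzV {m : ℕ} (F : ℂ → Fin m → ℂ) (z : ℂ) : Fin m → ℂ :=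
  fun i => (fderiv ℝ (fun w => F w i) z 1
    - Complex.I * fderiv ℝ (fun w => F w i) z Complex.I) / 2

/-- Conjugate Wirtinger derivative `∂_z̄ = (∂_x + i ∂_y)/2` of a `ℂ^m`-valued map. -/
noncomputable def wdzbarV {m : ℕ} (F : ℂ → Fin m → ℂ) (z : ℂ) : Fin m → ℂ :=
  fun i => (fderiv ℝ (fun w => F w i) z 1
    + Complex.I * fderiv ℝ (fun w => F w i) z Complex.I) / 2

/-- Wirtinger derivative of a scalar map. -/
noncomputable def wdz (F : ℂ → ℂ) (z : ℂ) : ℂ :=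
  (fderiv ℝ F z 1 - Complex.I * fderiv ℝ F z Complex.I) / 2

/-- Conjugate Wirtinger derivative of a scalar map (auxiliary). -/
noncomputable def wdzb (F : ℂ → ℂ) (z : ℂ) : ℂ :=
  (fderiv ℝ F z 1 + Complex.I * fderiv ℝ F z Complex.I) / 2

section SchwAuxToolkit

lemma wdz_congr {F G : ℂ → ℂ} {z : ℂ} (h : F =ᶠ[nhds z] G) : wdz F z = wdz G z := by
  unfold wdz; rw [Filter.EventuallyEq.fderiv_eq h]

lemma wdzb_congr {F G : ℂ → ℂ} {z : ℂ} (h : F =ᶠ[nhds z] G) : wdzb F z = wdzb G z := by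
  unfold wdzb; rw [Filter.EventuallyEq.fderiv_eq h]

lemma wdz_const (c : ℂ) (z : ℂ) : wdz (fun _ => c) z = 0 := by simp [wdz]
lemma wdzb_const (c : ℂ) (z : ℂ) : wdzb (fun _ => c) z = 0 := by simp [wdzb]

lemma fderiv_mul_apply {F G : ℂ → ℂ} {z : ℂ} (hF : DifferentiableAt ℝ F z)
    (hG : DifferentiableAt ℝ G z) (v : ℂ) :
    fderiv ℝ (fun w => F w * G w) z v = fderiv ℝ F z v * G z + F z * fderiv ℝ G z v := by
  rw [fderiv_fun_mul hF hG]; simp [smul_eq_mul]; ring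

lemma wdz_mul {F G : ℂ → ℂ} {z : ℂ} (hF : DifferentiableAt ℝ F z)
    (hG : DifferentiableAt ℝ G z) :
    wdz (fun w => F w * G w) z = wdz F z * G z + F z * wdz G z := by
  unfold wdz; rw [fderiv_mul_apply hF hG, fderiv_mul_apply hF hG]; ring

lemma wdzb_mul {F G : ℂ → ℂ} {z : ℂ} (hF : DifferentiableAt ℝ F z)
    (hG : DifferentiableAt ℝ G z) :
    wdzb (fun w => F w * G w) z = wdzb F z * G z + F z * wdzb G z := by
  unfold wdzb; rw [fderiv_mul_apply hF hG, fderiv_mul_apply hF hG]; ring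

lemma wdz_sum {ι : Type*} (s : Finset ι) (F : ι → ℂ → ℂ) {z : ℂ}
    (h : ∀ i ∈ s, DifferentiableAt ℝ (F i) z) :
    wdz (fun w => ∑ i ∈ s, F i w) z = ∑ i ∈ s, wdz (F i) z := by
  unfold wdz; rw [fderiv_fun_sum h]
  simp only [ContinuousLinearMap.sum_apply, Finset.mul_sum]
  rw [← Finset.sum_sub_distrib, Finset.sum_div]

lemma wdzb_sum {ι : Type*} (s : Finset ι) (F : ι → ℂ → ℂ) {z : ℂ}
    (h : ∀ i ∈ s, DifferentiableAt ℝ (F i) z) :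
    wdzb (fun w => ∑ i ∈ s, F i w) z = ∑ i ∈ s, wdzb (F i) z := by
  unfold wdzb; rw [fderiv_fun_sum h]
  simp only [ContinuousLinearMap.sum_apply, Finset.mul_sum]
  rw [← Finset.sum_add_distrib, Finset.sum_div]

lemma wdz_neg {F : ℂ → ℂ} {z : ℂ} : wdz (fun w => -(F w)) z = -(wdz F z) := by
  unfold wdz; rw [fderiv_fun_neg]; simp; ring

lemma wdzb_neg {F : ℂ → ℂ} {z : ℂ} : wdzb (fun w => -(F w)) z = -(wdzb F z) := by
  unfold wdzb; rw [fderiv_fun_neg]; simp; ring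

lemma wdz_add {F G : ℂ → ℂ} {z : ℂ} (hF : DifferentiableAt ℝ F z)
    (hG : DifferentiableAt ℝ G z) :
    wdz (fun w => F w + G w) z = wdz F z + wdz G z := by
  unfold wdz; rw [fderiv_fun_add hF hG]; simp; ring

lemma wdzb_add {F G : ℂ → ℂ} {z : ℂ} (hF : DifferentiableAt ℝ F z)
    (hG : DifferentiableAt ℝ G z) :
    wdzb (fun w => F w + G w) z = wdzb F z + wdzb G z := by
  unfold wdzb; rw [fderiv_fun_add hF hG]; simp; ring

lemma wdz_const_mul {F : ℂ → ℂ} {z : ℂ} (hF : DifferentiableAt ℝ F z) (c : ℂ) :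
    wdz (fun w => c * F w) z = c * wdz F z := by
  unfold wdz; rw [fderiv_const_mul hF c]; simp [smul_eq_mul]; ring

lemma diff_ofReal {g : ℂ → ℝ} {z : ℂ} (hg : DifferentiableAt ℝ g z) :
    DifferentiableAt ℝ (fun w => ((g w : ℝ) : ℂ)) z :=
  Complex.ofRealCLM.differentiable.differentiableAt.comp z hg

lemma fderiv_ofReal' {g : ℂ → ℝ} {z : ℂ} (hg : DifferentiableAt ℝ g z) (v : ℂ) :
    fderiv ℝ (fun w => (g w : ℂ)) z v = (fderiv ℝ g z v : ℂ) := by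
  have h := (Complex.ofRealCLM.hasFDerivAt.comp z hg.hasFDerivAt).fderiv
  rw [show (fun w => (g w : ℂ)) = Complex.ofRealCLM ∘ g from rfl, h]; rfl

lemma diff_proj {m : ℕ} {g : ℂ → Fin m → ℝ} {z : ℂ} (hg : DifferentiableAt ℝ g z) (i : Fin m) :
    DifferentiableAt ℝ (fun w => g w i) z :=
  ((ContinuousLinearMap.proj (R := ℝ) (φ := fun _ : Fin m => ℝ) i).differentiable.differentiableAt).comp z hg

lemma fderiv_proj {m : ℕ} {g : ℂ → Fin m → ℝ} {z : ℂ} (hg : DifferentiableAt ℝ g z)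
    (i : Fin m) (v : ℂ) :
    fderiv ℝ (fun w => g w i) z v = fderiv ℝ g z v i := by
  have h := (((ContinuousLinearMap.proj (R := ℝ) (φ := fun _ : Fin m => ℝ) i)).hasFDerivAt.comp z hg.hasFDerivAt).fderiv
  rw [show (fun w => g w i) = (ContinuousLinearMap.proj (R := ℝ) (φ := fun _ : Fin m => ℝ) i) ∘ g from rfl, h]; rfl

lemma diff_coord {m : ℕ} {g : ℂ → Fin m → ℝ} {z : ℂ} (hg : DifferentiableAt ℝ g z) (i : Fin m) :
    DifferentiableAt ℝ (fun w => ((g w i : ℝ) : ℂ)) z :=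
  Complex.ofRealCLM.differentiable.differentiableAt.comp z (diff_proj hg i)

lemma fderiv_coord {m : ℕ} {g : ℂ → Fin m → ℝ} {z : ℂ} (hg : DifferentiableAt ℝ g z)
    (i : Fin m) (v : ℂ) :
    fderiv ℝ (fun w => ((g w i : ℝ) : ℂ)) z v = ((fderiv ℝ g z v i : ℝ) : ℂ) := by
  rw [fderiv_ofReal' (diff_proj hg i), fderiv_proj hg]

lemma wdz_exp_real {g : ℂ → ℝ} {z : ℂ} (hg : DifferentiableAt ℝ g z) :
    wdz (fun w => ((Real.exp (g w) : ℝ) : ℂ)) z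
      = (Real.exp (g z) : ℂ) * wdz (fun w => ((g w : ℝ) : ℂ)) z := by
  unfold wdz
  rw [fderiv_ofReal' hg.exp 1, fderiv_ofReal' hg.exp Complex.I,
    fderiv_ofReal' hg 1, fderiv_ofReal' hg Complex.I, fderiv_exp hg]
  simp only [ContinuousLinearMap.smul_apply, smul_eq_mul]; push_cast; ring

lemma wdzb_exp_real {g : ℂ → ℝ} {z : ℂ} (hg : DifferentiableAt ℝ g z) :
    wdzb (fun w => ((Real.exp (g w) : ℝ) : ℂ)) z
      = (Real.exp (g z) : ℂ) * wdzb (fun w => ((g w : ℝ) : ℂ)) z := by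
  unfold wdzb
  rw [fderiv_ofReal' hg.exp 1, fderiv_ofReal' hg.exp Complex.I,
    fderiv_ofReal' hg 1, fderiv_ofReal' hg Complex.I, fderiv_exp hg]
  simp only [ContinuousLinearMap.smul_apply, smul_eq_mul]; push_cast; ring

lemma diff_dir {E' : Type*} [NormedAddCommGroup E'] [NormedSpace ℝ E']
    {g : ℂ → E'} {z : ℂ} (hg : ContDiffAt ℝ 2 g z) (a : ℂ) :
    DifferentiableAt ℝ (fun w => fderiv ℝ g w a) z := by
  have hd : DifferentiableAt ℝ (fderiv ℝ g) z :=
    (hg.fderiv_right (m := 1) (by norm_num)).differentiableAt one_ne_zero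
  exact ((ContinuousLinearMap.apply ℝ E' a).differentiable.differentiableAt).comp z hd

lemma fderiv_dir {g : ℂ → ℂ} {z : ℂ} (hg : ContDiffAt ℝ 2 g z) (a b : ℂ) :
    fderiv ℝ (fun w => fderiv ℝ g w a) z b = fderiv ℝ (fderiv ℝ g) z b a := by
  have hd : DifferentiableAt ℝ (fderiv ℝ g) z :=
    (hg.fderiv_right (m := 1) (by norm_num)).differentiableAt one_ne_zero
  rw [show (fun w => fderiv ℝ g w a) = (fun w => (fderiv ℝ g w) ((fun _ => a) w)) from rfl,
    fderiv_clm_apply hd (differentiableAt_const a)]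
  simp

lemma fderiv_lin {A B : ℂ → ℂ} {z : ℂ} (hA : DifferentiableAt ℝ A z)
    (hB : DifferentiableAt ℝ B z) (c : ℂ) (v : ℂ) :
    fderiv ℝ (fun w => (A w + c * B w) / 2) z v
      = (fderiv ℝ A z v + c * fderiv ℝ B z v) / 2 := by
  have h2 : (fun w => (A w + c * B w) / 2) = fun w => (1/2 : ℂ) * (A w + c * B w) := by
    funext w; ring
  have h := ((hA.hasFDerivAt.add (hB.hasFDerivAt.const_mul c)).const_mul ((1:ℂ)/2)).fderiv
  rw [h2, show (fun w => (1:ℂ)/2 * (A w + c * B w)) = (fun y => (1:ℂ) / 2 * (A + fun y => c * B y) y) from rfl, h]; simp [smul_eq_mul]; ring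

lemma snd_symm {g : ℂ → ℂ} {z : ℂ} (hg : ContDiffAt ℝ 2 g z) (a b : ℂ) :
    fderiv ℝ (fun w => fderiv ℝ g w a) z b = fderiv ℝ (fun w => fderiv ℝ g w b) z a := by
  rw [fderiv_dir hg, fderiv_dir hg]
  exact (hg.isSymmSndFDerivAt (by simp)) b a

lemma wdz_wdzb_comm {g : ℂ → ℂ} {z : ℂ} (hg : ContDiffAt ℝ 2 g z) :
    wdz (fun w => wdzb g w) z = wdzb (fun w => wdz g w) z := by
  have hA := diff_dir hg (1 : ℂ)
  have hB := diff_dir hg (Complex.I)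
  have hs := snd_symm hg 1 Complex.I
  unfold wdz wdzb
  rw [show (fun w => (fderiv ℝ g w 1 - Complex.I * fderiv ℝ g w Complex.I) / 2)
      = fun w => (fderiv ℝ g w 1 + (-Complex.I) * fderiv ℝ g w Complex.I) / 2 from by
        funext w; ring,
    fderiv_lin hA hB, fderiv_lin hA hB, fderiv_lin hA hB, fderiv_lin hA hB]
  rw [hs]; ring_nf

lemma wdzb_wdz_real {g : ℂ → ℂ} {z : ℂ} (hg : ContDiffAt ℝ 2 g z) :
    wdzb (fun w => wdz g w) z
      = (fderiv ℝ (fun w => fderiv ℝ g w 1) z 1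
          + fderiv ℝ (fun w => fderiv ℝ g w Complex.I) z Complex.I) / 4 := by
  have hA := diff_dir hg (1 : ℂ)
  have hB := diff_dir hg (Complex.I)
  have hs := snd_symm hg 1 Complex.I
  unfold wdz wdzb
  rw [show (fun w => (fderiv ℝ g w 1 - Complex.I * fderiv ℝ g w Complex.I) / 2)
      = fun w => (fderiv ℝ g w 1 + (-Complex.I) * fderiv ℝ g w Complex.I) / 2 from by
        funext w; ring,
    fderiv_lin hA hB, fderiv_lin hA hB]
  rw [hs]; ring_nf; simp [Complex.I_sq]; ring_nf

lemma dot_comb {m : ℕ} (a b a' b' : Fin m → ℝ) (p q r s : ℂ) :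
    dotC (fun i => p * (a i : ℂ) + q * (b i : ℂ)) (fun i => r * (a' i : ℂ) + s * (b' i : ℂ))
      = p * r * (dotR a a' : ℂ) + p * s * (dotR a b' : ℂ)
        + q * r * (dotR b a' : ℂ) + q * s * (dotR b b' : ℂ) := by
  simp only [dotC, dotR]
  push_cast
  rw [Finset.mul_sum, Finset.mul_sum, Finset.mul_sum, Finset.mul_sum,
    ← Finset.sum_add_distrib, ← Finset.sum_add_distrib, ← Finset.sum_add_distrib]
  exact Finset.sum_congr rfl fun i _ => by ring

lemma dotC_comm {m : ℕ} (x y : Fin m → ℂ) : dotC x y = dotC y x := by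
  simp [dotC, mul_comm]

lemma dotR_comm {m : ℕ} (x y : Fin m → ℝ) : dotR x y = dotR y x := by
  simp [dotR, mul_comm]

lemma dotC_split {m : ℕ} (x y v : Fin m → ℂ) :
    dotC (fun i => x i + y i) v = dotC x v + dotC y v := by
  simp [dotC, add_mul, Finset.sum_add_distrib]

lemma dotC_sub {m : ℕ} (x y v : Fin m → ℂ) :
    dotC (fun i => x i - y i) v = dotC x v - dotC y v := by
  simp [dotC, sub_mul, Finset.sum_sub_distrib]

lemma dotC_mulc {m : ℕ} (c : ℂ) (x v : Fin m → ℂ) :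
    dotC (fun i => c * x i) v = c * dotC x v := by
  simp [dotC, mul_assoc, Finset.mul_sum]

lemma dotC_split_r {m : ℕ} (x y v : Fin m → ℂ) :
    dotC v (fun i => x i + y i) = dotC v x + dotC v y := by
  simp [dotC, mul_add, Finset.sum_add_distrib]

lemma dotC_mulc_r {m : ℕ} (c : ℂ) (x v : Fin m → ℂ) :
    dotC v (fun i => c * x i) = c * dotC v x := by
  simp only [dotC]
  rw [Finset.mul_sum]
  exact Finset.sum_congr rfl fun i _ => by ring

lemma dotC_comb4 {m : ℕ} (x1 x2 x3 x4 y : Fin m → ℂ) (p q r : ℂ) :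
    dotC (p • x1 + q • x2 + r • x3 + x4) y
      = p * dotC x1 y + q * dotC x2 y + r * dotC x3 y + dotC x4 y := by
  simp only [dotC, Pi.add_apply, Pi.smul_apply, smul_eq_mul]
  rw [Finset.sum_congr rfl (fun i _ =>
      (by ring : (p * x1 i + q * x2 i + r * x3 i + x4 i) * y i
        = p * (x1 i * y i) + q * (x2 i * y i) + r * (x3 i * y i) + x4 i * y i)),
    Finset.sum_add_distrib, Finset.sum_add_distrib, Finset.sum_add_distrib,
    ← Finset.mul_sum, ← Finset.mul_sum, ← Finset.mul_sum]

lemma lorBC_add_smul (n : ℕ) (x y w : Fin (n + 2) → ℂ) (s : ℂ) :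
    lorBC n (x + s • y) w = lorBC n x w + s * lorBC n y w := by
  simp only [lorBC, Pi.add_apply, Pi.smul_apply, smul_eq_mul]
  rw [Finset.sum_congr rfl (fun (i : Fin (n+1)) _ =>
      (by ring : (x i.succ + s * y i.succ) * w i.succ
        = x i.succ * w i.succ + s * (y i.succ * w i.succ))),
    Finset.sum_add_distrib, ← Finset.mul_sum]
  ring

end SchwAuxToolkit

/-- Euclidean expression of the conformal Schwarzian: for a conformal immersion
`f : M → Sⁿ` with conformal factor `e^{2u}`, normalized light-cone lift
`ψ = e^{-u}(1,f)`, mean curvature vector `H` and `(2,0)`-part `II^{(2,0)}` of the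
second fundamental form, the Schwarzian `c` defined by the inhomogeneous Hill equation
`ψ_{zz} + (c/2)ψ = κ`, `κ ⊥ V = span{ψ, ψ_z, ψ_z̄, ψ_{zz̄}}`, satisfies
`c/2 = ⟨H, II^{(2,0)}⟩ + u_{zz} - u_z²`. -/
theorem schwarzian_euclidean_expression
    (n : ℕ) (M : Set ℂ) (hM : IsOpen M)
    (f : ℂ → Fin (n + 1) → ℝ) (hf : ContDiffOn ℝ (⊤ : ℕ∞) f M)
    (hsphere : ∀ z ∈ M, ∑ i, f z i ^ 2 = 1)
    (u : ℂ → ℝ) (hu : ContDiffOn ℝ (⊤ : ℕ∞) u M)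
    -- conformality: |df|² = e^{2u}|dz|²
    (hconf : ∀ z ∈ M,
      dotR (fderiv ℝ f z 1) (fderiv ℝ f z 1) = Real.exp (2 * u z) ∧
      dotR (fderiv ℝ f z Complex.I) (fderiv ℝ f z Complex.I) = Real.exp (2 * u z) ∧
      dotR (fderiv ℝ f z 1) (fderiv ℝ f z Complex.I) = 0)
    -- mean curvature vector H of f in Sⁿ: normal part of Δf/(2e^{2u})
    (H : ℂ → Fin (n + 1) → ℝ)
    (hH : ∀ z ∈ M,
      (∃ a b c' : ℝ,
        fderiv ℝ (fun w => fderiv ℝ f w 1) z 1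
            + fderiv ℝ (fun w => fderiv ℝ f w Complex.I) z Complex.I
          = a • f z + b • fderiv ℝ f z 1 + c' • fderiv ℝ f z Complex.I
            + (2 * Real.exp (2 * u z)) • H z) ∧
      dotR (H z) (f z) = 0 ∧ dotR (H z) (fderiv ℝ f z 1) = 0 ∧
      dotR (H z) (fderiv ℝ f z Complex.I) = 0)
    -- (2,0)-part of the second fundamental form: normal part of f_{zz}
    (II20 : ℂ → Fin (n + 1) → ℂ)
    (hII : ∀ z ∈ M,
      (∃ α β γ : ℂ,
        wdzV (fun w => wdzV (fun ζ i => (f ζ i : ℂ)) w) z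
          = α • (fun i => (f z i : ℂ)) + β • (fun i => ((fderiv ℝ f z 1) i : ℂ))
            + γ • (fun i => ((fderiv ℝ f z Complex.I) i : ℂ)) + II20 z) ∧
      dotC (II20 z) (fun i => (f z i : ℂ)) = 0 ∧
      dotC (II20 z) (fun i => ((fderiv ℝ f z 1) i : ℂ)) = 0 ∧
      dotC (II20 z) (fun i => ((fderiv ℝ f z Complex.I) i : ℂ)) = 0)
    -- the normalized light-cone lift ψ = e^{-u}(1,f) and its complexification
    (ψ : ℂ → Fin (n + 2) → ℝ)
    (hψdef : ∀ z, ψ z = Real.exp (-(u z)) • (Fin.cons 1 (f z) : Fin (n + 2) → ℝ))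
    (ψC : ℂ → Fin (n + 2) → ℂ)
    (hψC : ∀ z i, ψC z i = (ψ z i : ℂ))
    -- the Schwarzian c and Hopf differential κ, defined by the Hill equation
    (c : ℂ → ℂ) (κ : ℂ → Fin (n + 2) → ℂ)
    (hHill : ∀ z ∈ M,
      wdzV (fun w => wdzV ψC w) z + (c z / 2) • ψC z = κ z)
    -- κ is orthogonal to V = span{ψ, ψ_x, ψ_y, ψ_{zz̄}}
    (hκperp : ∀ z ∈ M,
      lorBC n (κ z) (ψC z) = 0 ∧
      lorBC n (κ z) (fun i => ((fderiv ℝ ψ z 1) i : ℂ)) = 0 ∧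
      lorBC n (κ z) (fun i => ((fderiv ℝ ψ z Complex.I) i : ℂ)) = 0 ∧
      lorBC n (κ z) (wdzbarV (fun w => wdzV ψC w) z) = 0) :
    ∀ z ∈ M,
      c z / 2
        = dotC (fun i => (H z i : ℂ)) (II20 z)
          + (wdz (fun w => wdz (fun ζ => (u ζ : ℂ)) w) z
            - (wdz (fun ζ => (u ζ : ℂ)) z) ^ 2) := by
  intro z hz
  classical
  have hmz : M ∈ nhds z := hM.mem_nhds hz
  -- abbreviations
  set Fc : ℂ → Fin (n + 1) → ℂ := fun w i => ((f w i : ℝ) : ℂ) with hFcdef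
  set FZ : ℂ → Fin (n + 1) → ℂ := fun w => wdzV Fc w with hFZdef
  set FZB : ℂ → Fin (n + 1) → ℂ := fun w => wdzbarV Fc w with hFZBdef
  set UC : ℂ → ℂ := fun ζ => ((u ζ : ℝ) : ℂ) with hUCdef
  set UZ : ℂ → ℂ := fun w => wdz UC w with hUZdef
  set UZB : ℂ → ℂ := fun w => wdzb UC w with hUZBdef
  set E : ℂ → ℂ := fun w => ((Real.exp (-(u w)) : ℝ) : ℂ) with hEdef
  set PZ : ℂ → Fin (n + 2) → ℂ := fun w => wdzV ψC w with hPZdef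
  set FZZ : Fin (n + 1) → ℂ := wdzV FZ z with hFZZdef
  set FZZB : Fin (n + 1) → ℂ := wdzbarV FZ z with hFZZBdef
  set PZZ : Fin (n + 2) → ℂ := wdzV PZ z with hPZZdef
  set W : Fin (n + 2) → ℂ := wdzbarV PZ z with hWdef
  -- specialize hypotheses
  obtain ⟨hc1, hc2, hc3⟩ := hconf z hz
  obtain ⟨⟨a, b, c2, hLap⟩, hHf0, hHfx, hHfy⟩ := hH z hz
  obtain ⟨⟨α, β, γ, hIIeq⟩, hIIf, hIIx, hIIy⟩ := hII z hz
  have hHill' := hHill z hz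
  have hκ4 := (hκperp z hz).2.2.2
  -- Stage A : differentiability
  have hfA : ∀ w ∈ M, ContDiffAt ℝ 2 f w := fun w hw => (hf.contDiffAt (hM.mem_nhds hw)).of_le (WithTop.coe_le_coe.mpr le_top)
  have huA : ∀ w ∈ M, ContDiffAt ℝ 2 u w := fun w hw => (hu.contDiffAt (hM.mem_nhds hw)).of_le (WithTop.coe_le_coe.mpr le_top)
  have hfd : ∀ w ∈ M, DifferentiableAt ℝ f w := fun w hw => (hfA w hw).differentiableAt (by norm_num)
  have hud : ∀ w ∈ M, DifferentiableAt ℝ u w := fun w hw => (huA w hw).differentiableAt (by norm_num)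
  have hFcd : ∀ w ∈ M, ∀ i, DifferentiableAt ℝ (fun ζ => Fc ζ i) w :=
    fun w hw i => diff_coord (hfd w hw) i
  have hFc2 : ∀ i, ContDiffAt ℝ 2 (fun ζ => Fc ζ i) z := fun i =>
    Complex.ofRealCLM.contDiff.comp_contDiffAt z
      ((ContinuousLinearMap.proj (R := ℝ) (φ := fun _ : Fin (n+1) => ℝ) i).contDiff.comp_contDiffAt z (hfA z hz))
  -- first derivative formulas on M
  have hFZf : ∀ w ∈ M, ∀ i, FZ w i
      = (1/2 : ℂ) * (((fderiv ℝ f w 1) i : ℝ) : ℂ)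
        + (-Complex.I/2) * (((fderiv ℝ f w Complex.I) i : ℝ) : ℂ) := by
    intro w hw i
    show wdz (fun ζ => Fc ζ i) w = _
    unfold wdz
    rw [show (fun ζ => Fc ζ i) = (fun ζ => ((f ζ i : ℝ) : ℂ)) from rfl,
      fderiv_coord (hfd w hw) i 1, fderiv_coord (hfd w hw) i Complex.I]
    ring
  have hFZBf : ∀ w ∈ M, ∀ i, FZB w i
      = (1/2 : ℂ) * (((fderiv ℝ f w 1) i : ℝ) : ℂ)
        + (Complex.I/2) * (((fderiv ℝ f w Complex.I) i : ℝ) : ℂ) := by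
    intro w hw i
    show wdzb (fun ζ => Fc ζ i) w = _
    unfold wdzb
    rw [show (fun ζ => Fc ζ i) = (fun ζ => ((f ζ i : ℝ) : ℂ)) from rfl,
      fderiv_coord (hfd w hw) i 1, fderiv_coord (hfd w hw) i Complex.I]
    ring
  -- Stage B : zeroth/first order dot identities on M
  have hdFF : ∀ w ∈ M, dotC (Fc w) (Fc w) = 1 := by
    intro w hw
    have e : dotC (Fc w) (Fc w) = ((∑ i, f w i ^ 2 : ℝ) : ℂ) := by
      simp only [dotC, hFcdef]; push_cast
      exact Finset.sum_congr rfl fun i _ => by ring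
    rw [e, hsphere w hw]; norm_num
  have hdFzFz : ∀ w ∈ M, dotC (FZ w) (FZ w) = 0 := by
    intro w hw
    obtain ⟨k1, k2, k3⟩ := hconf w hw
    rw [show FZ w = fun i => (1/2 : ℂ) * (((fderiv ℝ f w 1) i : ℝ) : ℂ)
        + (-Complex.I/2) * (((fderiv ℝ f w Complex.I) i : ℝ) : ℂ) from funext (hFZf w hw),
      dot_comb, k1, k2, k3,
      show dotR (fderiv ℝ f w Complex.I) (fderiv ℝ f w 1) = 0 from by
        rw [dotR_comm]; exact k3]
    push_cast
    linear_combination (Complex.exp (2 * (u w : ℂ))/4) * Complex.I_sq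
  have hdFzbFzb : ∀ w ∈ M, dotC (FZB w) (FZB w) = 0 := by
    intro w hw
    obtain ⟨k1, k2, k3⟩ := hconf w hw
    rw [show FZB w = fun i => (1/2 : ℂ) * (((fderiv ℝ f w 1) i : ℝ) : ℂ)
        + (Complex.I/2) * (((fderiv ℝ f w Complex.I) i : ℝ) : ℂ) from funext (hFZBf w hw),
      dot_comb, k1, k2, k3,
      show dotR (fderiv ℝ f w Complex.I) (fderiv ℝ f w 1) = 0 from by
        rw [dotR_comm]; exact k3]
    push_cast
    linear_combination (Complex.exp (2 * (u w : ℂ))/4) * Complex.I_sq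
  have hdFzFzb : ∀ w ∈ M, dotC (FZ w) (FZB w) = ((Real.exp (2 * u w) : ℝ) : ℂ) / 2 := by
    intro w hw
    obtain ⟨k1, k2, k3⟩ := hconf w hw
    rw [show FZ w = fun i => (1/2 : ℂ) * (((fderiv ℝ f w 1) i : ℝ) : ℂ)
        + (-Complex.I/2) * (((fderiv ℝ f w Complex.I) i : ℝ) : ℂ) from funext (hFZf w hw),
      show FZB w = fun i => (1/2 : ℂ) * (((fderiv ℝ f w 1) i : ℝ) : ℂ)
        + (Complex.I/2) * (((fderiv ℝ f w Complex.I) i : ℝ) : ℂ) from funext (hFZBf w hw),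
      dot_comb, k1, k2, k3,
      show dotR (fderiv ℝ f w Complex.I) (fderiv ℝ f w 1) = 0 from by
        rw [dotR_comm]; exact k3]
    push_cast
    linear_combination (-Complex.exp (2 * (u w : ℂ))/4) * Complex.I_sq
  -- Stage C : machinery for differentiating identities
  have hev_wdz : ∀ (g h : ℂ → ℂ) (w : ℂ), w ∈ M → (∀ w' ∈ M, g w' = h w') →
      wdz g w = wdz h w := fun g h w hw he =>
    wdz_congr (Filter.eventuallyEq_of_mem (hM.mem_nhds hw) he)
  have hev_wdzb : ∀ (g h : ℂ → ℂ) (w : ℂ), w ∈ M → (∀ w' ∈ M, g w' = h w') →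
      wdzb g w = wdzb h w := fun g h w hw he =>
    wdzb_congr (Filter.eventuallyEq_of_mem (hM.mem_nhds hw) he)
  have hddz : ∀ (x y : ℂ → Fin (n + 1) → ℂ) (w : ℂ),
      (∀ i, DifferentiableAt ℝ (fun ζ => x ζ i) w) →
      (∀ i, DifferentiableAt ℝ (fun ζ => y ζ i) w) →
      wdz (fun ζ => ∑ i, x ζ i * y ζ i) w
        = ∑ i, (wdz (fun ζ => x ζ i) w * y w i + x w i * wdz (fun ζ => y ζ i) w) := by
    intro x y w hx hy
    rw [wdz_sum Finset.univ (fun i ζ => x ζ i * y ζ i) (fun i _ => (hx i).mul (hy i))]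
    exact Finset.sum_congr rfl fun i _ => wdz_mul (hx i) (hy i)
  have hddzb : ∀ (x y : ℂ → Fin (n + 1) → ℂ) (w : ℂ),
      (∀ i, DifferentiableAt ℝ (fun ζ => x ζ i) w) →
      (∀ i, DifferentiableAt ℝ (fun ζ => y ζ i) w) →
      wdzb (fun ζ => ∑ i, x ζ i * y ζ i) w
        = ∑ i, (wdzb (fun ζ => x ζ i) w * y w i + x w i * wdzb (fun ζ => y ζ i) w) := by
    intro x y w hx hy
    rw [wdzb_sum Finset.univ (fun i ζ => x ζ i * y ζ i) (fun i _ => (hx i).mul (hy i))]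
    exact Finset.sum_congr rfl fun i _ => wdzb_mul (hx i) (hy i)
  have key : ∀ (x y : ℂ → Fin (n + 1) → ℂ) (g : ℂ → ℂ) (w : ℂ), w ∈ M →
      (∀ i, DifferentiableAt ℝ (fun ζ => x ζ i) w) →
      (∀ i, DifferentiableAt ℝ (fun ζ => y ζ i) w) →
      (∀ w' ∈ M, ∑ i, x w' i * y w' i = g w') →
      ∑ i, (wdz (fun ζ => x ζ i) w * y w i + x w i * wdz (fun ζ => y ζ i) w) = wdz g w := by
    intro x y g w hw hx hy hval
    rw [← hddz x y w hx hy]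
    exact hev_wdz _ g w hw hval
  have keyb : ∀ (x y : ℂ → Fin (n + 1) → ℂ) (g : ℂ → ℂ) (w : ℂ), w ∈ M →
      (∀ i, DifferentiableAt ℝ (fun ζ => x ζ i) w) →
      (∀ i, DifferentiableAt ℝ (fun ζ => y ζ i) w) →
      (∀ w' ∈ M, ∑ i, x w' i * y w' i = g w') →
      ∑ i, (wdzb (fun ζ => x ζ i) w * y w i + x w i * wdzb (fun ζ => y ζ i) w) = wdzb g w := by
    intro x y g w hw hx hy hval
    rw [← hddzb x y w hx hy]
    exact hev_wdzb _ g w hw hval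
  have htwo : ∀ t : ℂ, 2 * t = 0 → t = 0 := by
    intro t ht
    exact (mul_eq_zero.mp ht).resolve_left two_ne_zero
  -- dotC Fc FZ = 0 and dotC Fc FZB = 0 on M
  have hdFcFz : ∀ w ∈ M, dotC (Fc w) (FZ w) = 0 := by
    intro w hw
    have h := key Fc Fc (fun _ => 1) w hw (hFcd w hw) (hFcd w hw)
      (fun w' hw' => hdFF w' hw')
    have h2 : ∑ i, (FZ w i * Fc w i + Fc w i * FZ w i) = 0 :=
      h.trans (wdz_const 1 w)
    apply htwo
    rw [show 2 * dotC (Fc w) (FZ w) = ∑ i, (FZ w i * Fc w i + Fc w i * FZ w i) from by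
      simp only [dotC, Finset.mul_sum]
      exact Finset.sum_congr rfl fun i _ => by ring]
    exact h2
  have hdFcFzb : ∀ w ∈ M, dotC (Fc w) (FZB w) = 0 := by
    intro w hw
    have h := keyb Fc Fc (fun _ => 1) w hw (hFcd w hw) (hFcd w hw)
      (fun w' hw' => hdFF w' hw')
    have h2 : ∑ i, (FZB w i * Fc w i + Fc w i * FZB w i) = 0 :=
      h.trans (wdzb_const 1 w)
    apply htwo
    rw [show 2 * dotC (Fc w) (FZB w) = ∑ i, (FZB w i * Fc w i + Fc w i * FZB w i) from by
      simp only [dotC, Finset.mul_sum]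
      exact Finset.sum_congr rfl fun i _ => by ring]
    exact h2
  -- Stage D : differentiability at z of derived quantities; exp formulas
  have hFZd : ∀ i, DifferentiableAt ℝ (fun w => FZ w i) z := by
    intro i
    have he : (fun w => FZ w i) =ᶠ[nhds z]
        (fun w => (1/2 : ℂ) * (((fderiv ℝ f w 1) i : ℝ) : ℂ)
          + (-Complex.I/2) * (((fderiv ℝ f w Complex.I) i : ℝ) : ℂ)) :=
      Filter.eventuallyEq_of_mem hmz (fun w hw => hFZf w hw i)
    rw [he.differentiableAt_iff]
    exact ((diff_coord (diff_dir (hfA z hz) 1) i).const_mul _).add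
      ((diff_coord (diff_dir (hfA z hz) Complex.I) i).const_mul _)
  have hFZBd : ∀ i, DifferentiableAt ℝ (fun w => FZB w i) z := by
    intro i
    have he : (fun w => FZB w i) =ᶠ[nhds z]
        (fun w => (1/2 : ℂ) * (((fderiv ℝ f w 1) i : ℝ) : ℂ)
          + (Complex.I/2) * (((fderiv ℝ f w Complex.I) i : ℝ) : ℂ)) :=
      Filter.eventuallyEq_of_mem hmz (fun w hw => hFZBf w hw i)
    rw [he.differentiableAt_iff]
    exact ((diff_coord (diff_dir (hfA z hz) 1) i).const_mul _).add
      ((diff_coord (diff_dir (hfA z hz) Complex.I) i).const_mul _)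
  have hUZf : ∀ w ∈ M, UZ w = (1/2 : ℂ) * ((fderiv ℝ u w 1 : ℝ) : ℂ)
      + (-Complex.I/2) * ((fderiv ℝ u w Complex.I : ℝ) : ℂ) := by
    intro w hw
    show wdz (fun ζ => ((u ζ : ℝ) : ℂ)) w = _
    unfold wdz
    rw [fderiv_ofReal' (hud w hw) 1, fderiv_ofReal' (hud w hw) Complex.I]
    ring
  have hUZBf : ∀ w ∈ M, UZB w = (1/2 : ℂ) * ((fderiv ℝ u w 1 : ℝ) : ℂ)
      + (Complex.I/2) * ((fderiv ℝ u w Complex.I : ℝ) : ℂ) := by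
    intro w hw
    show wdzb (fun ζ => ((u ζ : ℝ) : ℂ)) w = _
    unfold wdzb
    rw [fderiv_ofReal' (hud w hw) 1, fderiv_ofReal' (hud w hw) Complex.I]
    ring
  have hUZd : DifferentiableAt ℝ UZ z := by
    have he : UZ =ᶠ[nhds z]
        (fun w => (1/2 : ℂ) * ((fderiv ℝ u w 1 : ℝ) : ℂ)
          + (-Complex.I/2) * ((fderiv ℝ u w Complex.I : ℝ) : ℂ)) :=
      Filter.eventuallyEq_of_mem hmz (fun w hw => hUZf w hw)
    rw [he.differentiableAt_iff]
    exact ((diff_ofReal (diff_dir (huA z hz) 1)).const_mul _).add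
      ((diff_ofReal (diff_dir (huA z hz) Complex.I)).const_mul _)
  have hUZBd : DifferentiableAt ℝ UZB z := by
    have he : UZB =ᶠ[nhds z]
        (fun w => (1/2 : ℂ) * ((fderiv ℝ u w 1 : ℝ) : ℂ)
          + (Complex.I/2) * ((fderiv ℝ u w Complex.I : ℝ) : ℂ)) :=
      Filter.eventuallyEq_of_mem hmz (fun w hw => hUZBf w hw)
    rw [he.differentiableAt_iff]
    exact ((diff_ofReal (diff_dir (huA z hz) 1)).const_mul _).add
      ((diff_ofReal (diff_dir (huA z hz) Complex.I)).const_mul _)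
  have hEd : ∀ w ∈ M, DifferentiableAt ℝ E w := by
    intro w hw
    exact diff_ofReal ((hud w hw).neg.exp)
  have hwdzE : ∀ w ∈ M, wdz E w = -(UZ w) * E w := by
    intro w hw
    have e0 : E = fun ζ => ((Real.exp ((fun ζ' => -(u ζ')) ζ) : ℝ) : ℂ) := rfl
    rw [e0, wdz_exp_real (g := fun ζ' => -(u ζ')) (hud w hw).neg]
    rw [show (fun ζ => (((fun ζ' => -(u ζ')) ζ : ℝ) : ℂ)) = fun ζ => -(((u ζ : ℝ)) : ℂ) from by
      funext ζ; push_cast; ring]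
    rw [wdz_neg]
    show _ = -(wdz (fun ζ => ((u ζ : ℝ) : ℂ)) w) * ((Real.exp (-(u w)) : ℝ) : ℂ)
    ring
  have hwdzbE : ∀ w ∈ M, wdzb E w = -(UZB w) * E w := by
    intro w hw
    have e0 : E = fun ζ => ((Real.exp ((fun ζ' => -(u ζ')) ζ) : ℝ) : ℂ) := rfl
    rw [e0, wdzb_exp_real (g := fun ζ' => -(u ζ')) (hud w hw).neg]
    rw [show (fun ζ => (((fun ζ' => -(u ζ')) ζ : ℝ) : ℂ)) = fun ζ => -(((u ζ : ℝ)) : ℂ) from by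
      funext ζ; push_cast; ring]
    rw [show wdzb (fun ζ => -(((u ζ : ℝ)) : ℂ)) w = -(wdzb (fun ζ => ((u ζ : ℝ) : ℂ)) w) from wdzb_neg]
    show _ = -(wdzb (fun ζ => ((u ζ : ℝ) : ℂ)) w) * ((Real.exp (-(u w)) : ℝ) : ℂ)
    ring
  -- mixed derivative symmetry for the coordinates of f
  have hmix : ∀ i, wdz (fun ζ => FZB ζ i) z = FZZB i := by
    intro i
    have e0 : (fun ζ => FZB ζ i) = fun ζ => wdzb (fun ζ' => Fc ζ' i) ζ := rfl
    rw [e0, wdz_wdzb_comm (hFc2 i)]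
    rfl
  -- Stage E : second order dot identities at z
  set X : ℂ := ((Real.exp (2 * u z) : ℝ) : ℂ) with hXdef
  have h1 : dotC (Fc z) FZZ = 0 := by
    have h := key Fc FZ (fun _ => 0) z hz (hFcd z hz) hFZd (fun w' hw' => hdFcFz w' hw')
    have h2 : ∑ i, (FZ z i * FZ z i + Fc z i * FZZ i) = 0 := h.trans (wdz_const 0 z)
    have h3 : dotC (FZ z) (FZ z) + dotC (Fc z) FZZ = 0 := by
      rw [← h2, Finset.sum_add_distrib]; rfl
    rw [hdFzFz z hz] at h3
    linear_combination h3
  have h2' : dotC (Fc z) FZZB = -(X/2) := by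
    have h := keyb Fc FZ (fun _ => 0) z hz (hFcd z hz) hFZd (fun w' hw' => hdFcFz w' hw')
    have h2 : ∑ i, (FZB z i * FZ z i + Fc z i * FZZB i) = 0 := h.trans (wdzb_const 0 z)
    have h3 : dotC (FZB z) (FZ z) + dotC (Fc z) FZZB = 0 := by
      rw [← h2, Finset.sum_add_distrib]; rfl
    rw [dotC_comm, hdFzFzb z hz] at h3
    linear_combination h3
  have h3' : dotC (FZ z) FZZ = 0 := by
    have h := key FZ FZ (fun _ => 0) z hz hFZd hFZd (fun w' hw' => hdFzFz w' hw')
    have h2 : ∑ i, (FZZ i * FZ z i + FZ z i * FZZ i) = 0 := h.trans (wdz_const 0 z)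
    apply htwo
    rw [show 2 * dotC (FZ z) FZZ = ∑ i, (FZZ i * FZ z i + FZ z i * FZZ i) from by
      simp only [dotC, Finset.mul_sum]
      exact Finset.sum_congr rfl fun i _ => by ring]
    exact h2
  have h4' : dotC (FZ z) FZZB = 0 := by
    have h := keyb FZ FZ (fun _ => 0) z hz hFZd hFZd (fun w' hw' => hdFzFz w' hw')
    have h2 : ∑ i, (FZZB i * FZ z i + FZ z i * FZZB i) = 0 := h.trans (wdzb_const 0 z)
    apply htwo
    rw [show 2 * dotC (FZ z) FZZB = ∑ i, (FZZB i * FZ z i + FZ z i * FZZB i) from by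
      simp only [dotC, Finset.mul_sum]
      exact Finset.sum_congr rfl fun i _ => by ring]
    exact h2
  have h5' : dotC (FZB z) FZZB = 0 := by
    have h := key FZB FZB (fun _ => 0) z hz hFZBd hFZBd (fun w' hw' => hdFzbFzb w' hw')
    have h2 := h.trans (wdz_const 0 z)
    rw [show (∑ i, (wdz (fun ζ => FZB ζ i) z * FZB z i + FZB z i * wdz (fun ζ => FZB ζ i) z))
        = ∑ i, (FZZB i * FZB z i + FZB z i * FZZB i) from
      Finset.sum_congr rfl fun i _ => by rw [hmix i]] at h2
    apply htwo
    rw [show 2 * dotC (FZB z) FZZB = ∑ i, (FZZB i * FZB z i + FZB z i * FZZB i) from by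
      simp only [dotC, Finset.mul_sum]
      exact Finset.sum_congr rfl fun i _ => by ring]
    exact h2
  have h6' : dotC FZZ (FZB z) = X * UZ z := by
    have h := key FZ FZB (fun w => ((Real.exp (2 * u w) : ℝ) : ℂ)/2) z hz hFZd hFZBd
      (fun w' hw' => hdFzFzb w' hw')
    have h2 := h
    rw [show (∑ i, (wdz (fun ζ => FZ ζ i) z * FZB z i + FZ z i * wdz (fun ζ => FZB ζ i) z))
        = ∑ i, (FZZ i * FZB z i + FZ z i * FZZB i) from
      Finset.sum_congr rfl fun i _ => by rw [hmix i]; rfl] at h2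
    have h3 : dotC FZZ (FZB z) + dotC (FZ z) FZZB
        = wdz (fun w => ((Real.exp (2 * u w) : ℝ) : ℂ)/2) z := by
      rw [← h2, Finset.sum_add_distrib]; rfl
    have hgz : wdz (fun w => ((Real.exp (2 * u w) : ℝ) : ℂ)/2) z = X * UZ z := by
      rw [show (fun w => ((Real.exp (2 * u w) : ℝ) : ℂ)/2)
          = fun w => (1/2 : ℂ) * ((Real.exp (2 * u w) : ℝ) : ℂ) from by
        funext w'; ring]
      rw [wdz_const_mul (diff_ofReal ((hud z hz).const_mul 2).exp) _,
        wdz_exp_real ((hud z hz).const_mul 2),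
        show (fun w => ((2 * u w : ℝ) : ℂ)) = fun w => (2 : ℂ) * ((u w : ℝ) : ℂ) from by
          funext w'; push_cast; ring,
        wdz_const_mul (diff_ofReal (hud z hz)) 2]
      show (1/2 : ℂ) * (((Real.exp (2 * u z) : ℝ) : ℂ) * (2 * wdz (fun ζ => ((u ζ : ℝ) : ℂ)) z))
        = X * wdz (fun ζ => ((u ζ : ℝ) : ℂ)) z
      rw [hXdef]; ring
    rw [h4'] at h3
    rw [← hgz]
    linear_combination h3
  -- Stage F : Laplacian link and II20 pairing
  rw [← hFZZdef] at hIIeq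
  rw [← hPZZdef] at hHill'
  rw [← hWdef] at hκ4
  have hFZZBeq : ∀ i, FZZB i
      = ((a * f z i + b * (fderiv ℝ f z 1) i + c2 * (fderiv ℝ f z Complex.I) i
          + (2 * Real.exp (2 * u z)) * H z i : ℝ) : ℂ) / 4 := by
    intro i
    have hsym : FZZB i = (fderiv ℝ (fun w => fderiv ℝ (fun ζ => Fc ζ i) w 1) z 1
        + fderiv ℝ (fun w => fderiv ℝ (fun ζ => Fc ζ i) w Complex.I) z Complex.I) / 4 := by
      have e0 : FZZB i = wdzb (fun ζ => wdz (fun ζ' => Fc ζ' i) ζ) z := rfl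
      rw [e0, wdzb_wdz_real (hFc2 i)]
    have hD : ∀ v : ℂ, fderiv ℝ (fun w => fderiv ℝ (fun ζ => Fc ζ i) w v) z v
        = (((fderiv ℝ (fun w => fderiv ℝ f w v) z v) i : ℝ) : ℂ) := by
      intro v
      have hcoord : (fun w => fderiv ℝ (fun ζ => Fc ζ i) w v) =ᶠ[nhds z]
          (fun w => (((fderiv ℝ f w v) i : ℝ) : ℂ)) :=
        Filter.eventuallyEq_of_mem hmz (fun w hw => fderiv_coord (hfd w hw) i v)
      rw [hcoord.fderiv_eq]
      exact fderiv_coord (diff_dir (hfA z hz) v) i v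
    have h' : (fderiv ℝ (fun w => fderiv ℝ f w 1) z 1) i
        + (fderiv ℝ (fun w => fderiv ℝ f w Complex.I) z Complex.I) i
        = a * f z i + b * (fderiv ℝ f z 1) i + c2 * (fderiv ℝ f z Complex.I) i
          + (2 * Real.exp (2 * u z)) * H z i := by
      have hc := congrFun hLap i
      simpa using hc
    rw [hsym, hD 1, hD Complex.I, ← h']
    push_cast
    ring
  have hfxz : (fun i => (((fderiv ℝ f z 1) i : ℝ) : ℂ)) = fun i => FZ z i + FZB z i := by
    funext i; rw [hFZf z hz i, hFZBf z hz i]; ring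
  have hfyz : (fun i => (((fderiv ℝ f z Complex.I) i : ℝ) : ℂ))
      = fun i => Complex.I * (FZ z i - FZB z i) := by
    funext i; rw [hFZf z hz i, hFZBf z hz i]
    linear_combination (((fderiv ℝ f z Complex.I) i : ℂ)) * Complex.I_sq
  have hα : α = 0 := by
    have h2 := congrArg (fun t : Fin (n + 1) → ℂ => dotC t (Fc z)) hIIeq
    rw [dotC_comb4] at h2
    rw [show dotC (fun i => ((f z i : ℝ) : ℂ)) (Fc z) = 1 from hdFF z hz,
      show dotC (fun i => (((fderiv ℝ f z 1) i : ℝ) : ℂ)) (Fc z) = 0 from by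
        rw [hfxz, dotC_split, dotC_comm (FZ z), dotC_comm (FZB z),
          hdFcFz z hz, hdFcFzb z hz]; ring,
      show dotC (fun i => (((fderiv ℝ f z Complex.I) i : ℝ) : ℂ)) (Fc z) = 0 from by
        rw [hfyz, dotC_mulc, dotC_sub, dotC_comm (FZ z), dotC_comm (FZB z),
          hdFcFz z hz, hdFcFzb z hz]; ring,
      show dotC (II20 z) (Fc z) = 0 from hIIf] at h2
    have h3 : dotC FZZ (Fc z) = 0 := by rw [dotC_comm]; exact h1
    rw [h3] at h2
    linear_combination -h2
  have hdZZ : dotC FZZ FZZB = X / 2 * dotC (II20 z) (fun i => ((H z i : ℝ) : ℂ)) := by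
    have h2 := congrArg (fun t : Fin (n + 1) → ℂ => dotC t FZZB) hIIeq
    rw [dotC_comb4, hα] at h2
    rw [show dotC (fun i => (((fderiv ℝ f z 1) i : ℝ) : ℂ)) FZZB = 0 from by
        rw [hfxz, dotC_split, h4', h5']; ring,
      show dotC (fun i => (((fderiv ℝ f z Complex.I) i : ℝ) : ℂ)) FZZB = 0 from by
        rw [hfyz, dotC_mulc, dotC_sub, h4', h5']; ring] at h2
    have hr : dotC (II20 z) FZZB
        = (a : ℂ) / 4 * dotC (II20 z) (fun i => ((f z i : ℝ) : ℂ))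
          + (b : ℂ) / 4 * dotC (II20 z) (fun i => (((fderiv ℝ f z 1) i : ℝ) : ℂ))
          + (c2 : ℂ) / 4 * dotC (II20 z) (fun i => (((fderiv ℝ f z Complex.I) i : ℝ) : ℂ))
          + X / 2 * dotC (II20 z) (fun i => ((H z i : ℝ) : ℂ)) := by
      rw [show FZZB = fun i => (a : ℂ)/4 * ((f z i : ℝ) : ℂ)
          + ((b : ℂ)/4 * (((fderiv ℝ f z 1) i : ℝ) : ℂ)
          + ((c2 : ℂ)/4 * (((fderiv ℝ f z Complex.I) i : ℝ) : ℂ)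
          + X/2 * ((H z i : ℝ) : ℂ))) from by
        funext i; rw [hFZZBeq i, hXdef]; push_cast; ring]
      rw [dotC_split_r, dotC_split_r, dotC_split_r, dotC_mulc_r, dotC_mulc_r,
        dotC_mulc_r, dotC_mulc_r]
      ring
    rw [hr, hIIf, hIIx, hIIy] at h2
    linear_combination h2
  -- Stage G : the lift side
  have hψ0 : ∀ w, ψC w 0 = E w := by
    intro w; rw [hψC, hψdef]
    simp only [Pi.smul_apply, Fin.cons_zero, smul_eq_mul, mul_one, hEdef]
  have hψs : ∀ w (i : Fin (n + 1)), ψC w i.succ = E w * Fc w i := by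
    intro w i; rw [hψC, hψdef]
    simp only [Pi.smul_apply, Fin.cons_succ, smul_eq_mul, hEdef, hFcdef]
    push_cast; ring
  have hPZ0 : ∀ w ∈ M, PZ w 0 = -(UZ w) * E w := by
    intro w hw
    have e0 : PZ w 0 = wdz (fun ζ => ψC ζ 0) w := rfl
    rw [e0, show (fun ζ => ψC ζ 0) = E from funext hψ0]
    exact hwdzE w hw
  have hPZs : ∀ w ∈ M, ∀ i : Fin (n + 1), PZ w i.succ = E w * (-(UZ w) * Fc w i + FZ w i) := by
    intro w hw i
    have e0 : PZ w i.succ = wdz (fun ζ => ψC ζ i.succ) w := rfl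
    rw [e0, show (fun ζ => ψC ζ i.succ) = fun ζ => E ζ * Fc ζ i from funext fun ζ => hψs ζ i,
      wdz_mul (hEd w hw) (hFcd w hw i), hwdzE w hw,
      show wdz (fun ζ => Fc ζ i) w = FZ w i from rfl]
    ring
  have hPZZ0 : PZZ 0 = (UZ z * UZ z - wdz UZ z) * E z := by
    have e0 : PZZ 0 = wdz (fun w => PZ w 0) z := rfl
    rw [e0, hev_wdz _ (fun w => -(UZ w) * E w) z hz (fun w hw => hPZ0 w hw),
      wdz_mul (F := fun w => -(UZ w)) hUZd.neg (hEd z hz), wdz_neg, hwdzE z hz]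
    ring
  have hPZZs : ∀ i : Fin (n + 1), PZZ i.succ
      = E z * ((UZ z * UZ z - wdz UZ z) * Fc z i - 2 * UZ z * FZ z i + FZZ i) := by
    intro i
    have e0 : PZZ i.succ = wdz (fun w => PZ w i.succ) z := rfl
    rw [e0, hev_wdz _ (fun w => E w * (-(UZ w) * Fc w i + FZ w i)) z hz
        (fun w hw => hPZs w hw i),
      wdz_mul (G := fun w => -(UZ w) * Fc w i + FZ w i) (hEd z hz) ((hUZd.neg.mul (hFcd z hz i)).add (hFZd i)),
      wdz_add (F := fun w => -(UZ w) * Fc w i) (G := fun w => FZ w i) (hUZd.neg.mul (hFcd z hz i)) (hFZd i),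
      wdz_mul (F := fun w => -(UZ w)) (G := fun w => Fc w i) hUZd.neg (hFcd z hz i), wdz_neg, hwdzE z hz,
      show wdz (fun ζ => Fc ζ i) z = FZ z i from rfl,
      show wdz (fun ζ => FZ ζ i) z = FZZ i from rfl]
    ring
  have hW0 : W 0 = (UZ z * UZB z - wdzb UZ z) * E z := by
    have e0 : W 0 = wdzb (fun w => PZ w 0) z := rfl
    rw [e0, hev_wdzb _ (fun w => -(UZ w) * E w) z hz (fun w hw => hPZ0 w hw),
      wdzb_mul (F := fun w => -(UZ w)) hUZd.neg (hEd z hz), wdzb_neg, hwdzbE z hz]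
    ring
  have hWs : ∀ i : Fin (n + 1), W i.succ
      = E z * ((UZ z * UZB z - wdzb UZ z) * Fc z i - UZ z * FZB z i - UZB z * FZ z i + FZZB i) := by
    intro i
    have e0 : W i.succ = wdzb (fun w => PZ w i.succ) z := rfl
    rw [e0, hev_wdzb _ (fun w => E w * (-(UZ w) * Fc w i + FZ w i)) z hz
        (fun w hw => hPZs w hw i),
      wdzb_mul (G := fun w => -(UZ w) * Fc w i + FZ w i) (hEd z hz) ((hUZd.neg.mul (hFcd z hz i)).add (hFZd i)),
      wdzb_add (F := fun w => -(UZ w) * Fc w i) (G := fun w => FZ w i) (hUZd.neg.mul (hFcd z hz i)) (hFZd i),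
      wdzb_mul (F := fun w => -(UZ w)) (G := fun w => Fc w i) hUZd.neg (hFcd z hz i), wdzb_neg, hwdzbE z hz,
      show wdzb (fun ζ => Fc ζ i) z = FZB z i from rfl,
      show wdzb (fun ζ => FZ ζ i) z = FZZB i from rfl]
    ring
  have hEX : E z * E z * X = 1 := by
    simp only [hEdef, hXdef]
    rw [← Complex.ofReal_mul, ← Complex.ofReal_mul, ← Real.exp_add, ← Real.exp_add]
    rw [show -(u z) + -(u z) + 2 * u z = 0 from by ring, Real.exp_zero]
    norm_num
  have hsum1 : ∀ (x y : Fin (n + 1) → ℂ) (cc : ℂ), (∑ i, cc * (x i * y i)) = cc * dotC x y := by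
    intro x y cc; rw [← Finset.mul_sum]; rfl
  have hLψW : lorBC n (ψC z) W = -(1/2 : ℂ) := by
    have hterm : ∀ i : Fin (n + 1), ψC z i.succ * W i.succ
        = (E z * E z * (UZ z * UZB z - wdzb UZ z)) * (Fc z i * Fc z i)
          + (E z * E z * (-(UZ z))) * (Fc z i * FZB z i)
          + (E z * E z * (-(UZB z))) * (Fc z i * FZ z i)
          + (E z * E z) * (Fc z i * FZZB i) := by
      intro i; rw [hψs z i, hWs i]; ring
    have hs : (∑ i : Fin (n + 1), ψC z i.succ * W i.succ)
        = (E z * E z * (UZ z * UZB z - wdzb UZ z)) * dotC (Fc z) (Fc z)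
          + (E z * E z * (-(UZ z))) * dotC (Fc z) (FZB z)
          + (E z * E z * (-(UZB z))) * dotC (Fc z) (FZ z)
          + (E z * E z) * dotC (Fc z) FZZB := by
      rw [Finset.sum_congr rfl fun i _ => hterm i]
      simp only [Finset.sum_add_distrib]
      rw [hsum1, hsum1, hsum1, hsum1]
    have e0 : lorBC n (ψC z) W
        = -(ψC z 0 * W 0) + ∑ i : Fin (n + 1), ψC z i.succ * W i.succ := rfl
    rw [e0, hs, hψ0 z, hW0, hdFF z hz, hdFcFzb z hz, hdFcFz z hz, h2']
    linear_combination (-(1 : ℂ)/2) * hEX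
  have hLPW : lorBC n PZZ W
      = (wdz UZ z - UZ z * UZ z) / 2
        + dotC (II20 z) (fun i => ((H z i : ℝ) : ℂ)) / 2 := by
    have hterm : ∀ i : Fin (n + 1), PZZ i.succ * W i.succ
        = (E z * E z * ((UZ z * UZ z - wdz UZ z) * (UZ z * UZB z - wdzb UZ z))) * (Fc z i * Fc z i)
          + (E z * E z * (-((UZ z * UZ z - wdz UZ z) * UZ z))) * (Fc z i * FZB z i)
          + (E z * E z * (-((UZ z * UZ z - wdz UZ z) * UZB z))) * (Fc z i * FZ z i)
          + (E z * E z * (UZ z * UZ z - wdz UZ z)) * (Fc z i * FZZB i)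
          + (E z * E z * (-(2 * UZ z * (UZ z * UZB z - wdzb UZ z)))) * (FZ z i * Fc z i)
          + (E z * E z * (2 * UZ z * UZ z)) * (FZ z i * FZB z i)
          + (E z * E z * (2 * UZ z * UZB z)) * (FZ z i * FZ z i)
          + (E z * E z * (-(2 * UZ z))) * (FZ z i * FZZB i)
          + (E z * E z * (UZ z * UZB z - wdzb UZ z)) * (FZZ i * Fc z i)
          + (E z * E z * (-(UZ z))) * (FZZ i * FZB z i)
          + (E z * E z * (-(UZB z))) * (FZZ i * FZ z i)
          + (E z * E z) * (FZZ i * FZZB i) := by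
      intro i; rw [hPZZs i, hWs i]; ring
    have hs : (∑ i : Fin (n + 1), PZZ i.succ * W i.succ)
        = (E z * E z * ((UZ z * UZ z - wdz UZ z) * (UZ z * UZB z - wdzb UZ z))) * dotC (Fc z) (Fc z)
          + (E z * E z * (-((UZ z * UZ z - wdz UZ z) * UZ z))) * dotC (Fc z) (FZB z)
          + (E z * E z * (-((UZ z * UZ z - wdz UZ z) * UZB z))) * dotC (Fc z) (FZ z)
          + (E z * E z * (UZ z * UZ z - wdz UZ z)) * dotC (Fc z) FZZB
          + (E z * E z * (-(2 * UZ z * (UZ z * UZB z - wdzb UZ z)))) * dotC (FZ z) (Fc z)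
          + (E z * E z * (2 * UZ z * UZ z)) * dotC (FZ z) (FZB z)
          + (E z * E z * (2 * UZ z * UZB z)) * dotC (FZ z) (FZ z)
          + (E z * E z * (-(2 * UZ z))) * dotC (FZ z) FZZB
          + (E z * E z * (UZ z * UZB z - wdzb UZ z)) * dotC FZZ (Fc z)
          + (E z * E z * (-(UZ z))) * dotC FZZ (FZB z)
          + (E z * E z * (-(UZB z))) * dotC FZZ (FZ z)
          + (E z * E z) * dotC FZZ FZZB := by
      rw [Finset.sum_congr rfl fun i _ => hterm i]
      simp only [Finset.sum_add_distrib]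
      rw [hsum1, hsum1, hsum1, hsum1, hsum1, hsum1, hsum1, hsum1, hsum1, hsum1, hsum1, hsum1]
    have e0 : lorBC n PZZ W
        = -(PZZ 0 * W 0) + ∑ i : Fin (n + 1), PZZ i.succ * W i.succ := rfl
    rw [e0, hs, hPZZ0, hW0, hdFF z hz, hdFcFzb z hz, hdFcFz z hz, h2',
      show dotC (FZ z) (Fc z) = 0 from by rw [dotC_comm]; exact hdFcFz z hz,
      hdFzFzb z hz, hdFzFz z hz, h4',
      show dotC FZZ (Fc z) = 0 from by rw [dotC_comm]; exact h1,
      h6', show dotC FZZ (FZ z) = 0 from by rw [dotC_comm]; exact h3',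
      hdZZ, ← hXdef]
    linear_combination ((wdz UZ z - UZ z * UZ z)/2
      + dotC (II20 z) (fun i => ((H z i : ℝ) : ℂ))/2) * hEX
  -- final assembly
  rw [← hHill', lorBC_add_smul, hLψW, hLPW] at hκ4
  rw [show wdz UC z = UZ z from rfl,
    dotC_comm (fun i => ((H z i : ℝ) : ℂ)) (II20 z)]
  linear_combination (-2 : ℂ) * hκ4
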